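/- Every execution on the trading graph constructed by the 3D-matching reduction can be transformed into an execution with the same total number of exchanges in which every cycle containing an E₀ edge contains exactly one E₀ edge. -/

import Mathlib

structure TState (N M : Type) where
  own : N → Finset M
  dem : N → Finset M

variable {N M : Type} [DecidableEq N] [DecidableEq M]

/-- In a trading cycle `c = [(i₁,j₁),…,(i_k,j_k)]`, agent `i_t` receives item `j_t`;
`gives c` pairs each agent with the item he gives, namely `j_{t-1}` (cyclically). -/
def gives (c : List (N × M)) : List (N × M) :=
  (c.map Prod.fst).zip ((c.rotate (c.length - 1)).map Prod.snd)

/-- A valid cycle step: nonempty, visits each agent and each item at most once,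
every participating agent receives an item he currently demands and gives an item
he currently owns. -/
def ValidCycle (s : TState N M) (c : List (N × M)) : Prop :=
  c ≠ [] ∧ (c.map Prod.fst).Nodup ∧ (c.map Prod.snd).Nodup ∧
    (∀ p ∈ c, p.2 ∈ s.dem p.1) ∧ (∀ p ∈ gives c, p.2 ∈ s.own p.1)

/-- The state after executing a cycle: every used demand edge is reversed into a
supply edge (the received item moves into the agent's supply and leaves his demand),
and every used supply edge is removed. -/
def stepCycle (s : TState N M) (c : List (N × M)) : TState N M where
  own i := ((s.own i).filter fun j => (i, j) ∉ gives c) ∪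
      ((c.filter fun p => decide (p.1 = i)).map Prod.snd).toFinset
  dem i := (s.dem i).filter fun j => (i, j) ∉ c

/-- An execution is a sequence of cycle steps, each valid in the successively
updated state. -/
def ValidExec (s : TState N M) : List (List (N × M)) → Prop
  | [] => True
  | c :: r => ValidCycle s c ∧ ValidExec (stepCycle s c) r

/-- Total number of exchanges (items received) in an execution. -/
def exchanges (r : List (List (N × M))) : ℕ := (r.map List.length).sum

/-- Number of items agent `i` receives during execution `r`. -/
def receivedCount (r : List (List (N × M))) (i : N) : ℕ :=
  (r.map fun c => c.countP fun p => decide (p.1 = i)).sum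

/-- Number of items agent `i` gives during execution `r`. -/
def givenCount (r : List (List (N × M))) (i : N) : ℕ :=
  (r.map fun c => (gives c).countP fun p => decide (p.1 = i)).sum

/-- A static execution allocates each item at most once. -/
def StaticExec (r : List (List (N × M))) : Prop := (r.flatten.map Prod.snd).Nodup

/-- Agents of the reduction from 3D-matching: `ga t 0, ga t 1, ga t 2` are the
gadget agents `(xyz)₂, (xyz)₄, (xyz)₆` for the triple `t = (x,y,z)`; `ya y = y₂`,
`za z = z₁`, `xa1 x = x₁`, `xa3 x = x₃`. -/
inductive RAg (n : ℕ) where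
  | ga : (Fin n × Fin n × Fin n) → Fin 3 → RAg n
  | ya : Fin n → RAg n
  | za : Fin n → RAg n
  | xa1 : Fin n → RAg n
  | xa3 : Fin n → RAg n
deriving DecidableEq

/-- Items of the reduction: `gi t 0, gi t 1, gi t 2, gi t 3` are the gadget items
`(xyz)₁, (xyz)₃, (xyz)₅, (xyz)₇`; `yi y = y₁`, `zi z = z₂`, `xi x = x₂`. -/
inductive RIt (n : ℕ) where
  | gi : (Fin n × Fin n × Fin n) → Fin 4 → RIt n
  | yi : Fin n → RIt n
  | zi : Fin n → RIt n
  | xi : Fin n → RIt n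
deriving DecidableEq

/-- Supply sets of the reduction instance built from the triple set `T`. -/
def RS (n : ℕ) (T : Finset (Fin n × Fin n × Fin n)) : RAg n → Finset (RIt n)
  | .ga t i => if t ∈ T then {.gi t i.castSucc} else ∅
  | .ya y => {.yi y}
  | .za z => (T.filter fun t => t.2.2 = z).image fun t => .gi t 3
  | .xa1 _ => Finset.univ.image RIt.zi
  | .xa3 x => {.xi x}

/-- Demand sets of the reduction instance built from the triple set `T`. -/
def RD (n : ℕ) (T : Finset (Fin n × Fin n × Fin n)) : RAg n → Finset (RIt n)
  | .ga t i =>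
      if t ∈ T then
        (if i = 0 then {.gi t 1, .gi t 3}
         else if i = 1 then {.yi t.2.1}
         else {.gi t 3})
      else ∅
  | .ya y => (T.filter fun t => t.2.1 = y).image fun t => .gi t 2
  | .za z => {.zi z}
  | .xa1 x => {.xi x}
  | .xa3 x => (T.filter fun t => t.1 = x).image fun t => .gi t 0

/-- Whether a demand edge (agent receives item) belongs to the class
`E₀ = {(x₁, x₂)}`. -/
def isE0 {n : ℕ} : RAg n × RIt n → Bool
  | (.xa1 x, .xi x') => x == x'
  | _ => false

/-- Whether a demand edge belongs to the class `E₆ = {((xyz)₂, (xyz)₇)}`. -/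
def isE6 {n : ℕ} : RAg n × RIt n → Bool
  | (.ga t i, .gi t' j) => t == t' && i == 0 && j == 3
  | _ => false

/-- The number of large `X`-cycles in an execution: cycle steps using an `E₀` edge
but no `E₆` edge. -/
def numLarge {n : ℕ} (r : List (List (RAg n × RIt n))) : ℕ :=
  r.countP fun c => (c.countP isE0 != 0) && (c.countP isE6 == 0)

/-- The number of `Y`-cycles in an execution: cycle steps using no `E₀` edge. -/
def numY {n : ℕ} (r : List (List (RAg n × RIt n))) : ℕ :=
  r.countP fun c => c.countP isE0 == 0

/-- A set of triples is a partial 3D-matching: pairwise disjoint in each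
coordinate. -/
def IsPartialMatching {n : ℕ} (S : Finset (Fin n × Fin n × Fin n)) : Prop :=
  ∀ t ∈ S, ∀ t' ∈ S, t ≠ t' →
    t.1 ≠ t'.1 ∧ t.2.1 ≠ t'.2.1 ∧ t.2.2 ≠ t'.2.2

/-!
An execution is rewritten one cycle at a time. Along any execution of the reduction instance,
every `x₁` keeps its supply edge to each `z₂` that is still demanded, and only `z₁` demands `z₂`.
A cycle through two `E₀` edges, rotated to start at the first one `(x₁, x₂)`, is `c₁ ++ c₂` with
`c₂` starting at the second one `(x'₁, x'₂)`. Closing `c₁` through the supply edge from `x₁` to the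
`z₂` received last in `c₁`, and `c₂` likewise, gives two valid cycles with the same exchanges. The
state reached differs from the original one only in who owns these two `z₂`, which nobody demands
any more, so the rest of the execution stays valid.
-/

open List

section Cycles

variable {α β : Type} {s s' s'' : TState α β} {c c₁ c₂ : List (α × β)}

-- `gives c₁ = (a₁, b₁) :: g₁` says that `a₁` leads `c₁` and `b₁` is the item received last in `c₁`.
variable {a₁ a₂ : α} {b₁ b₂ : β} {g₁ g₂ : List (α × β)}

lemma gives_eq_cons (hc : c ≠ []) :
    gives c = ((c.head hc).1, (c.getLast hc).2) ::
      (c.tail.map Prod.fst).zip (c.dropLast.map Prod.snd) := by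
  obtain ⟨l, q, rfl⟩ := (eq_nil_or_concat c).resolve_left hc
  rcases l with _ | ⟨p, t⟩
  · simp [gives]
  · simp only [gives, concat_eq_append, length_append, length_cons, length_nil,
      Nat.add_sub_cancel, map_cons, map_append, map_nil, dropLast_concat]
    simp

lemma exists_gives_cons (p : α × β) (t : List (α × β)) :
    ∃ b g, gives (p :: t) = (p.1, b) :: g :=
  ⟨_, _, gives_eq_cons (cons_ne_nil p t)⟩

lemma snd_mem_of_mem_gives {p : α × β} (h : p ∈ gives c) :
    p.2 ∈ c.map Prod.snd := by
  have h' : p.2 ∈ (gives c).map Prod.snd := mem_map_of_mem h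
  rwa [gives, map_snd_zip (by simp), map_rotate, mem_rotate] at h'

lemma gives_append (h₁ : gives c₁ = (a₁, b₁) :: g₁) (h₂ : gives c₂ = (a₂, b₂) :: g₂) :
    gives (c₁ ++ c₂) = (a₁, b₂) :: g₁ ++ (a₂, b₁) :: g₂ := by
  have hc₁ : c₁ ≠ [] := by rintro rfl; simp [gives] at h₁
  have hc₂ : c₂ ≠ [] := by rintro rfl; simp [gives] at h₂
  rw [gives_eq_cons hc₁, cons.injEq, Prod.mk.injEq] at h₁
  rw [gives_eq_cons hc₂, cons.injEq, Prod.mk.injEq] at h₂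
  obtain ⟨⟨rfl, rfl⟩, rfl⟩ := h₁
  obtain ⟨⟨rfl, rfl⟩, rfl⟩ := h₂
  rw [gives_eq_cons (append_ne_nil_of_left_ne_nil hc₁ _)]
  obtain ⟨p₂, t₂, rfl⟩ := exists_cons_of_ne_nil hc₂
  obtain ⟨l₁, q₁, rfl⟩ := (eq_nil_or_concat c₁).resolve_left hc₁
  rcases l₁ with _ | ⟨p₁, t₁⟩
  · simp
  · simp only [concat_eq_append, cons_append, append_assoc, nil_append, head_cons, ne_eq,
      append_eq_nil_iff, reduceCtorEq, and_false, not_false_eq_true, getLast_cons,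
      getLast_append_of_ne_nil, tail_cons, map_append, map_cons, map_dropLast, map_nil,
      cons_ne_self, getLast_singleton, cons.injEq, true_and]
    rw [← cons_append, dropLast_append_cons, dropLast_cons_cons, ← cons_append, dropLast_concat,
      append_cons _ q₁.1, zip_append (by simp)]
    simp

lemma gives_rotate (c : List (α × β)) (k : ℕ) :
    gives (c.rotate k) = (gives c).rotate k := by
  unfold gives
  rw [length_rotate, rotate_rotate, Nat.add_comm, ← rotate_rotate, map_rotate, map_rotate]
  exact (zipWith_rotate_distrib Prod.mk _ _ k (by simp)).symm

lemma ValidCycle.rotate (hc : ValidCycle s c) (k : ℕ) : ValidCycle s (c.rotate k) := by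
  obtain ⟨hne, hf, hs, hd, hg⟩ := hc
  refine ⟨by simpa using hne, ?_, ?_, fun p hp => hd p (mem_rotate.1 hp), fun p hp => ?_⟩
  · rwa [map_rotate, nodup_rotate]
  · rwa [map_rotate, nodup_rotate]
  · rw [gives_rotate, mem_rotate] at hp
    exact hg p hp

lemma ValidCycle.exists_dem_of_mem_gives (hc : ValidCycle s c) {p : α × β} (hp : p ∈ gives c) :
    ∃ i, p.2 ∈ s.dem i := by
  obtain ⟨q, hq, hqp⟩ := mem_map.1 (snd_mem_of_mem_gives hp)
  exact ⟨q.1, hqp ▸ hc.2.2.2.1 q hq⟩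

/-- Ownership of an item nobody demands any more is invisible to all later cycles. -/
def TState.AgreeOnDemanded (s s' : TState α β) : Prop :=
  (∀ i, s.dem i = s'.dem i) ∧ ∀ i j, (∃ a, j ∈ s.dem a) → (j ∈ s.own i ↔ j ∈ s'.own i)

lemma TState.AgreeOnDemanded.refl (s : TState α β) : s.AgreeOnDemanded s :=
  ⟨fun _ => rfl, fun _ _ _ => Iff.rfl⟩

lemma TState.AgreeOnDemanded.trans (h : s.AgreeOnDemanded s') (h' : s'.AgreeOnDemanded s'') :
    s.AgreeOnDemanded s'' :=
  ⟨fun i => (h.1 i).trans (h'.1 i), fun i j ⟨a, ha⟩ =>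
    (h.2 i j ⟨a, ha⟩).trans (h'.2 i j ⟨a, h.1 a ▸ ha⟩)⟩

lemma TState.AgreeOnDemanded.validCycle (h : s.AgreeOnDemanded s') (hc : ValidCycle s c) :
    ValidCycle s' c :=
  ⟨hc.1, hc.2.1, hc.2.2.1, fun p hp => h.1 p.1 ▸ hc.2.2.2.1 p hp,
    fun p hp => (h.2 p.1 p.2 (hc.exists_dem_of_mem_gives hp)).1 (hc.2.2.2.2 p hp)⟩

section Step

variable [DecidableEq α] [DecidableEq β]

lemma mem_dem_stepCycle {i : α} {j : β} :
    j ∈ (stepCycle s c).dem i ↔ j ∈ s.dem i ∧ (i, j) ∉ c := by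
  simp [stepCycle]

lemma mem_own_stepCycle {i : α} {j : β} :
    j ∈ (stepCycle s c).own i ↔ (j ∈ s.own i ∧ (i, j) ∉ gives c) ∨ (i, j) ∈ c := by
  simp only [stepCycle, Finset.mem_union, Finset.mem_filter, mem_toFinset, mem_map, mem_filter,
    decide_eq_true_eq]
  refine or_congr Iff.rfl ⟨?_, fun h => ⟨(i, j), ⟨h, rfl⟩, rfl⟩⟩
  rintro ⟨p, ⟨hp, rfl⟩, rfl⟩
  exact hp

lemma stepCycle_rotate (k : ℕ) : stepCycle s (c.rotate k) = stepCycle s c := by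
  simp only [stepCycle, gives_rotate, mem_rotate, TState.mk.injEq]
  refine ⟨funext fun i => ?_, trivial⟩
  rw [toFinset_eq_of_perm _ _ (((rotate_perm c k).filter _).map _)]

lemma validExec_append {r₁ r₂ : List (List (α × β))} :
    ValidExec s (r₁ ++ r₂) ↔ ValidExec s r₁ ∧ ValidExec (r₁.foldl stepCycle s) r₂ := by
  induction r₁ generalizing s with
  | nil => simp [ValidExec]
  | cons c r₁ ih => simp only [cons_append, ValidExec, ih, foldl_cons, and_assoc]

lemma TState.AgreeOnDemanded.stepCycle (h : s.AgreeOnDemanded s') :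
    (stepCycle s c).AgreeOnDemanded (stepCycle s' c) := by
  refine ⟨fun i => Finset.ext fun j => ?_, fun i j ⟨a, ha⟩ => ?_⟩
  · rw [mem_dem_stepCycle, mem_dem_stepCycle, h.1 i]
  · rw [mem_own_stepCycle, mem_own_stepCycle, h.2 i j ⟨a, (mem_dem_stepCycle.1 ha).1⟩]

lemma TState.AgreeOnDemanded.validExec {r : List (List (α × β))} (h : s.AgreeOnDemanded s')
    (hr : ValidExec s r) : ValidExec s' r := by
  induction r generalizing s s' with
  | nil => trivial
  | cons c r ih => exact ⟨h.validCycle hr.1, ih h.stepCycle hr.2⟩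

lemma ValidCycle.split_append (hc : ValidCycle s (c₁ ++ c₂))
    (hg₁ : gives c₁ = (a₁, b₁) :: g₁) (hg₂ : gives c₂ = (a₂, b₂) :: g₂)
    (hb₁ : b₁ ∈ s.own a₁) (hb₂ : b₂ ∈ s.own a₂) :
    ValidCycle s c₁ ∧ ValidCycle (stepCycle s c₁) c₂ := by
  obtain ⟨-, hf, hs, hd, hg⟩ := hc
  have hg' := gives_append hg₁ hg₂
  rw [map_append] at hf hs
  have hdisj : ∀ j ∈ c₁.map Prod.snd, j ∉ c₂.map Prod.snd :=
    fun j h₁ h₂ => disjoint_of_nodup_append hs h₁ h₂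
  refine ⟨⟨?_, hf.of_append_left, hs.of_append_left, fun p hp => hd p (mem_append_left _ hp), ?_⟩,
    ⟨?_, hf.of_append_right, hs.of_append_right, fun p hp => ?_, fun p hp => ?_⟩⟩
  · rintro rfl
    simp [gives] at hg₁
  · rw [hg₁, forall_mem_cons]
    exact ⟨hb₁, fun p hp => hg p (by simp [hg', hp])⟩
  · rintro rfl
    simp [gives] at hg₂
  · exact mem_dem_stepCycle.2 ⟨hd p (mem_append_right _ hp),
      fun hp₁ => hdisj p.2 (mem_map_of_mem hp₁) (mem_map_of_mem hp)⟩
  · refine mem_own_stepCycle.2 (Or.inl ⟨?_, fun hp₁ =>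
      hdisj p.2 (snd_mem_of_mem_gives hp₁) (snd_mem_of_mem_gives hp)⟩)
    rw [hg₂, mem_cons] at hp
    rcases hp with rfl | hp
    · exact hb₂
    · exact hg p (by simp [hg', hp])

/-- The two executions differ only in the owners of `b₁` and `b₂`, which nobody demands
afterwards. -/
lemma ValidCycle.agreeOnDemanded_stepCycle_append (hc : ValidCycle s (c₁ ++ c₂))
    (hg₁ : gives c₁ = (a₁, b₁) :: g₁) (hg₂ : gives c₂ = (a₂, b₂) :: g₂)
    (hb₁ : ∀ i i', b₁ ∈ s.dem i → b₁ ∈ s.dem i' → i = i')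
    (hb₂ : ∀ i i', b₂ ∈ s.dem i → b₂ ∈ s.dem i' → i = i') :
    (stepCycle s (c₁ ++ c₂)).AgreeOnDemanded (stepCycle (stepCycle s c₁) c₂) := by
  obtain ⟨-, -, hs, hd, -⟩ := hc
  rw [map_append] at hs
  have hdisj : ∀ j ∈ c₁.map Prod.snd, j ∉ c₂.map Prod.snd :=
    fun j h₁ h₂ => disjoint_of_nodup_append hs h₁ h₂
  have hreceived : ∀ {c a b g}, c ⊆ c₁ ++ c₂ → gives c = (a, b) :: g →
      (∀ i i', b ∈ s.dem i → b ∈ s.dem i' → i = i') → ∀ i, b ∈ s.dem i → (i, b) ∈ c₁ ++ c₂ := by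
    intro c a b g hsub hg hb i hi
    obtain ⟨q, hq, rfl⟩ := mem_map.1 (snd_mem_of_mem_gives (hg ▸ mem_cons_self))
    obtain rfl := hb _ _ (hd q (hsub hq)) hi
    exact hsub hq
  refine ⟨fun i => Finset.ext fun j => ?_, fun i j ⟨a, ha⟩ => ?_⟩
  · simp only [mem_dem_stepCycle, mem_append]
    tauto
  · rw [mem_dem_stepCycle] at ha
    have hj₁ : j ≠ b₁ := by
      rintro rfl
      exact ha.2 (hreceived (subset_append_left _ _) hg₁ hb₁ a ha.1)
    have hj₂ : j ≠ b₂ := by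
      rintro rfl
      exact ha.2 (hreceived (subset_append_right _ _) hg₂ hb₂ a ha.1)
    have hc₁g₂ : (i, j) ∈ c₁ → (i, j) ∉ g₂ := fun h h' =>
      hdisj j (mem_map_of_mem h) (snd_mem_of_mem_gives (hg₂ ▸ mem_cons_of_mem _ h'))
    simp only [mem_own_stepCycle, gives_append hg₁ hg₂, hg₁, hg₂, mem_cons, mem_append,
      Prod.mk.injEq, hj₁, hj₂, and_false, false_or]
    tauto

end Step

end Cycles

lemma List.exists_rotate_eq_cons_append_cons {γ : Type*} {p : γ → Bool} {l : List γ}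
    (h : 1 < l.countP p) :
    ∃ k a w b v, l.rotate k = a :: w ++ b :: v ∧ p a ∧ p b ∧ w.countP p = 0 := by
  obtain ⟨a, ha, hpa⟩ := countP_pos_iff.1 (by omega : 0 < l.countP p)
  obtain ⟨l₁, l₂, rfl⟩ := append_of_mem ha
  have hrot : (l₁ ++ a :: l₂).rotate l₁.length = a :: (l₂ ++ l₁) := by
    rw [rotate_append_length_eq, cons_append]
  have hcount : (l₂ ++ l₁).countP p ≠ 0 := by
    have := ((rotate_perm (l₁ ++ a :: l₂) l₁.length).countP_eq p).symm
    rw [hrot, countP_cons_of_pos hpa] at this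
    omega
  obtain ⟨b, hb⟩ :=
    Option.isSome_iff_exists.1 (find?_isSome.2 (countP_pos_iff.1 (Nat.pos_of_ne_zero hcount)))
  obtain ⟨hpb, w, v, hwv, hw⟩ := find?_eq_some_iff_append.1 hb
  exact ⟨l₁.length, a, w, b, v, by rw [hrot, hwv, cons_append], hpa, hpb,
    countP_eq_zero.2 (by simpa using hw)⟩

section Reduction

variable {n : ℕ} {T : Finset (Fin n × Fin n × Fin n)} {s : TState (RAg n) (RIt n)}
  {c : List (RAg n × RIt n)}

lemma eq_za_of_zi_mem_RD {i : RAg n} {z : Fin n} (h : RIt.zi z ∈ RD n T i) : i = RAg.za z := by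
  cases i <;> simp_all [RD]
  split_ifs at h <;> simp_all

lemma mem_RS_union_RD_xa1 {x : Fin n} {j : RIt n}
    (h : j ∈ RS n T (RAg.xa1 x) ∪ RD n T (RAg.xa1 x)) : (∃ z, j = RIt.zi z) ∨ j = RIt.xi x := by
  simp only [RS, RD, Finset.mem_union, Finset.mem_image, Finset.mem_univ, true_and,
    Finset.mem_singleton] at h
  exact h.imp (fun ⟨z, hz⟩ => ⟨z, hz.symm⟩) id

lemma eq_of_isE0 {p : RAg n × RIt n} (h : isE0 p = true) : ∃ x, p = (RAg.xa1 x, RIt.xi x) := by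
  obtain ⟨_ | _ | _ | x | _, _ | _ | _ | x'⟩ := p <;> simp [isE0] at h
  exact ⟨x, by rw [h]⟩

/-- The last clause holds because `z₂` can only leave `x₁` in a cycle in which `z₁`, its only
demander, receives it. -/
def ReductionInvariant (n : ℕ) (T : Finset (Fin n × Fin n × Fin n))
    (s : TState (RAg n) (RIt n)) : Prop :=
  (∀ i, s.own i ⊆ RS n T i ∪ RD n T i) ∧ (∀ i, s.dem i ⊆ RD n T i) ∧
    ∀ x z : Fin n, (∃ i, RIt.zi z ∈ s.dem i) → RIt.zi z ∈ s.own (RAg.xa1 x)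

lemma reductionInvariant_init (n : ℕ) (T : Finset (Fin n × Fin n × Fin n)) :
    ReductionInvariant n T ⟨RS n T, RD n T⟩ :=
  ⟨fun _ => Finset.subset_union_left, fun _ => subset_rfl, fun _ _ _ => by simp [RS]⟩

namespace ReductionInvariant

lemma eq_za_of_zi_mem_dem (hI : ReductionInvariant n T s) {i : RAg n} {z : Fin n}
    (h : RIt.zi z ∈ s.dem i) : i = RAg.za z :=
  eq_za_of_zi_mem_RD (hI.2.1 i h)

lemma stepCycle (hI : ReductionInvariant n T s) (hc : ValidCycle s c) :
    ReductionInvariant n T (stepCycle s c) := by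
  obtain ⟨hown, hdem, hzi⟩ := hI
  refine ⟨fun i j hj => ?_, fun i j hj => hdem i (mem_dem_stepCycle.1 hj).1, ?_⟩
  · rcases mem_own_stepCycle.1 hj with ⟨hj, -⟩ | hj
    · exact hown i hj
    · exact Finset.mem_union_right _ (hdem i (hc.2.2.2.1 _ hj))
  · rintro x z ⟨i, hi⟩
    obtain ⟨hiz, hic⟩ := mem_dem_stepCycle.1 hi
    refine mem_own_stepCycle.2 (Or.inl ⟨hzi x z ⟨i, hiz⟩, fun hg => hic ?_⟩)
    obtain ⟨q, hq, hqz⟩ := mem_map.1 (snd_mem_of_mem_gives hg)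
    have hq₁ : q.1 = i := by
      rw [eq_za_of_zi_mem_RD (hdem i hiz), eq_za_of_zi_mem_RD (hdem q.1 (hqz ▸ hc.2.2.2.1 q hq))]
    exact (Prod.ext hq₁ hqz : q = (i, RIt.zi z)) ▸ hq

lemma foldl_stepCycle (hI : ReductionInvariant n T s) {r : List (List (RAg n × RIt n))}
    (hr : ValidExec s r) : ReductionInvariant n T (r.foldl _root_.stepCycle s) := by
  induction r generalizing s with
  | nil => exact hI
  | cons c r ih => exact ih (hI.stepCycle hr.1) hr.2

lemma exists_zi_of_mem_gives (hI : ReductionInvariant n T s) (hc : ValidCycle s c) {x : Fin n}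
    {b : RIt n} (hg : (RAg.xa1 x, b) ∈ gives c) (hb : b ≠ RIt.xi x) : ∃ z, b = RIt.zi z :=
  (mem_RS_union_RD_xa1 (hI.1 _ (hc.2.2.2.2 _ hg))).resolve_right hb

lemma split_validCycle (hI : ReductionInvariant n T s) {x x' : Fin n}
    {t₁ t₂ : List (RAg n × RIt n)}
    (hc : ValidCycle s ((RAg.xa1 x, RIt.xi x) :: t₁ ++ (RAg.xa1 x', RIt.xi x') :: t₂)) :
    ValidCycle s ((RAg.xa1 x, RIt.xi x) :: t₁) ∧
      ValidCycle (_root_.stepCycle s ((RAg.xa1 x, RIt.xi x) :: t₁))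
        ((RAg.xa1 x', RIt.xi x') :: t₂) ∧
      (_root_.stepCycle s
          ((RAg.xa1 x, RIt.xi x) :: t₁ ++ (RAg.xa1 x', RIt.xi x') :: t₂)).AgreeOnDemanded
        (_root_.stepCycle (_root_.stepCycle s ((RAg.xa1 x, RIt.xi x) :: t₁))
          ((RAg.xa1 x', RIt.xi x') :: t₂)) := by
  obtain ⟨b₁, g₁, hg₁⟩ := exists_gives_cons (RAg.xa1 x, RIt.xi x) t₁
  obtain ⟨b₂, g₂, hg₂⟩ := exists_gives_cons (RAg.xa1 x', RIt.xi x') t₂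
  have hg := gives_append hg₁ hg₂
  have hdisj := disjoint_of_nodup_append (by simpa only [map_append] using hc.2.2.1)
  have hb₁ : b₁ ∈ map Prod.snd ((RAg.xa1 x, RIt.xi x) :: t₁) :=
    snd_mem_of_mem_gives (hg₁ ▸ mem_cons_self)
  have hb₂ : b₂ ∈ map Prod.snd ((RAg.xa1 x', RIt.xi x') :: t₂) :=
    snd_mem_of_mem_gives (hg₂ ▸ mem_cons_self)
  obtain ⟨z₁, rfl⟩ := hI.exists_zi_of_mem_gives hc (b := b₁) (x := x') (by rw [hg]; simp)
    fun h => hdisj hb₁ (h ▸ mem_cons_self)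
  obtain ⟨z₂, rfl⟩ := hI.exists_zi_of_mem_gives hc (b := b₂) (x := x) (by rw [hg]; simp)
    fun h => hdisj (h ▸ mem_cons_self) hb₂
  have hdem₁ := hc.exists_dem_of_mem_gives (by rw [hg]; simp : (RAg.xa1 x', RIt.zi z₁) ∈ _)
  have hdem₂ := hc.exists_dem_of_mem_gives (by rw [hg]; simp : (RAg.xa1 x, RIt.zi z₂) ∈ _)
  have huniq : ∀ z i i', RIt.zi z ∈ s.dem i → RIt.zi z ∈ s.dem i' → i = i' := fun z i i' h h' =>
    (hI.eq_za_of_zi_mem_dem h).trans (hI.eq_za_of_zi_mem_dem h').symm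
  obtain ⟨hc₁, hc₂⟩ := hc.split_append hg₁ hg₂ (hI.2.2 x z₁ hdem₁) (hI.2.2 x' z₂ hdem₂)
  exact ⟨hc₁, hc₂, hc.agreeOnDemanded_stepCycle_append hg₁ hg₂ (huniq z₁) (huniq z₂)⟩

lemma exists_validExec_of_validCycle (hI : ReductionInvariant n T s) (hc : ValidCycle s c) :
    ∃ rc : List (List (RAg n × RIt n)), ValidExec s rc ∧ exchanges rc = c.length ∧
      (∀ d ∈ rc, d.countP isE0 ≤ 1) ∧
      (_root_.stepCycle s c).AgreeOnDemanded (rc.foldl _root_.stepCycle s) := by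
  induction hlen : c.length using Nat.strong_induction_on generalizing s c with
  | _ len ih =>
  subst hlen
  by_cases hE0 : c.countP isE0 ≤ 1
  · exact ⟨[c], ⟨hc, trivial⟩, by simp [exchanges], by simpa using hE0, .refl _⟩
  obtain ⟨k, e, w, e', v, hrot, he, he', hw⟩ := exists_rotate_eq_cons_append_cons (not_le.1 hE0)
  obtain ⟨x, rfl⟩ := eq_of_isE0 he
  obtain ⟨x', rfl⟩ := eq_of_isE0 he'
  have hlen : c.length = w.length + v.length + 2 := by
    rw [← length_rotate c k, hrot]
    simp only [length_append, length_cons]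
    omega
  obtain ⟨hc₁, hc₂, hagree⟩ := hI.split_validCycle (hrot ▸ hc.rotate k)
  obtain ⟨rc, hrc, hex, hrcE0, hagree'⟩ :=
    ih _ (by simp [hlen]) (hI.stepCycle hc₁) hc₂ rfl
  refine ⟨_ :: rc, ⟨hc₁, hrc⟩, ?_, ?_, ?_⟩
  · simp only [exchanges, map_cons, sum_cons, length_cons] at hex ⊢
    omega
  · rintro d (_ | ⟨_, hd⟩)
    · simp [hw, isE0]
    · exact hrcE0 d hd
  · rw [← stepCycle_rotate k, hrot]
    exact hagree.trans hagree'

lemma exists_validExec_countP_isE0_le_one (hI : ReductionInvariant n T s)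
    {r : List (List (RAg n × RIt n))} (hr : ValidExec s r) :
    ∃ r', ValidExec s r' ∧ exchanges r' = exchanges r ∧ ∀ c ∈ r', c.countP isE0 ≤ 1 := by
  induction r generalizing s with
  | nil => exact ⟨[], trivial, rfl, by simp⟩
  | cons c r ih =>
    obtain ⟨rc, hrc, hex, hrcE0, hagree⟩ := hI.exists_validExec_of_validCycle hr.1
    obtain ⟨r', hr', hex', hr'E0⟩ := ih (hI.foldl_stepCycle hrc) (hagree.validExec hr.2)
    refine ⟨rc ++ r', validExec_append.2 ⟨hrc, hr'⟩, ?_, ?_⟩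
    · simp only [exchanges, map_append, map_cons, sum_append, sum_cons] at hex hex' ⊢
      rw [hex, hex']
    · simp only [mem_append]
      rintro d (hd | hd)
      exacts [hrcE0 d hd, hr'E0 d hd]

end ReductionInvariant

end Reduction

/-- Every execution on the reduction trading graph can be
transformed into one with the same total number of exchanges in which every cycle
containing an `E₀` edge contains exactly one `E₀` edge. -/
theorem stmt19 (n : ℕ) (T : Finset (Fin n × Fin n × Fin n))
    (r : List (List (RAg n × RIt n))) (hr : ValidExec ⟨RS n T, RD n T⟩ r) :
    ∃ r' : List (List (RAg n × RIt n)),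
      ValidExec ⟨RS n T, RD n T⟩ r' ∧ exchanges r' = exchanges r ∧
      ∀ c ∈ r', c.countP isE0 ≠ 0 → c.countP isE0 = 1 := by
  obtain ⟨r', hr', hex, hE0⟩ := (reductionInvariant_init n T).exists_validExec_countP_isE0_le_one hr
  exact ⟨r', hr', hex, fun c hc h0 => by have := hE0 c hc; omega⟩
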